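/- arXiv:1805.11287 — 2 statements merged into one kernel-verified Lean document; each statement's English description precedes it below -/
import Mathlib

section
/- Let P be an n-polytope in ℝⁿ, let (F₀,…,F_{n−1}) be a complete flag of P, and set F_n := P. Then for every subset I ⊂ {0,…,n}, the convex hull of the union ⋃_{i∈I} relint F_i equals the disjoint union ⨄_{i∈I} relint F_i; in particular the sets relint F_i for i ∈ I are pairwise disjoint and their union is convex. -/
/-!
Put `F_n := P`; the faces form an increasing chain of convex sets. An open segment from a point
of a convex set to a point of its relative interior stays in the relative interior, so a segment
joining `relint F_i` to `relint F_j` with `i ≤ j` lies in `relint F_j`, and the union is convex.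
For `i < j`, `F_i = P ∩ {f = c}` for a functional `f ≤ c` on `P`; if `F_i` met `relint F_j`, then
`f` would attain its maximum over `F_j` at a relative interior point and hence be constant on
`F_j`, forcing `F_j ⊆ F_i` against `dim F_i = i < j = dim F_j`.
-/

open Set MeasureTheory Filter
open scoped Topology RealInnerProductSpace symmDiff

noncomputable section

abbrev Euc (d : ℕ) : Type := EuclideanSpace ℝ (Fin d)

variable {d : ℕ}

/-- `P` is a polytope: the convex hull of finitely many points, with nonempty interior. -/
def IsPolytope (P : Set (Euc d)) : Prop :=
  ∃ V : Set (Euc d), V.Finite ∧ P = convexHull ℝ V ∧ (interior P).Nonempty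

/-- `F` is a face of `P`: the intersection of `P` with a supporting hyperplane. -/
def IsFace (P F : Set (Euc d)) : Prop :=
  ∃ (f : Euc d →L[ℝ] ℝ) (c : ℝ), f ≠ 0 ∧ (∀ x ∈ P, f x ≤ c) ∧ (∃ x ∈ P, f x = c) ∧
    F = {x ∈ P | f x = c}

/-- `F` is an `i`-face of `P`: a face spanning an `i`-dimensional affine subspace. -/
def IsFaceOfDim (P : Set (Euc d)) (i : ℕ) (F : Set (Euc d)) : Prop :=
  IsFace P F ∧ Module.finrank ℝ (vectorSpan ℝ F) = i

/-- A complete flag of `P`: an increasing sequence `F 0 ⊆ … ⊆ F (n-1)` with `F i` an `i`-face. -/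
def IsCompleteFlag (n : ℕ) (P : Set (Euc d)) (F : Fin n → Set (Euc d)) : Prop :=
  (∀ i : Fin n, IsFaceOfDim P (i : ℕ) (F i)) ∧ ∀ i j : Fin n, i ≤ j → F i ⊆ F j

/-- `v` is a vertex of `P`, i.e. `{v}` is a (0-dimensional) face of `P`. -/
def IsVertex (P : Set (Euc d)) (v : Euc d) : Prop := IsFace P {v}

/-- The set of complete flags of `P`. -/
def flags (n : ℕ) (P : Set (Euc d)) : Set (Fin n → Set (Euc d)) :=
  {F | IsCompleteFlag n P F}

/-- The set of complete flags of `P` whose `0`-face is the vertex `{v}`. -/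
def flagsAt (n : ℕ) (P : Set (Euc d)) (v : Euc d) : Set (Fin n → Set (Euc d)) :=
  {F | IsCompleteFlag n P F ∧ ∀ i : Fin n, v ∈ F i}

/-- `S` is an `n`-simplex: the convex hull of `n+1` affinely independent points. -/
def IsSimplex (n : ℕ) (S : Set (Euc d)) : Prop :=
  ∃ v : Fin (n + 1) → Euc d, AffineIndependent ℝ v ∧ S = convexHull ℝ (Set.range v)

/-- `S` is a flag simplex of `P` associated with the complete flag `F`: an `n`-simplex whose
vertices can be labelled so that `v i ∈ relint (F i)` for `i < n` and `v n ∈ int P`. -/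
def IsFlagSimplexAssoc (n : ℕ) (P : Set (Euc d)) (F : Fin n → Set (Euc d))
    (S : Set (Euc d)) : Prop :=
  ∃ v : Fin (n + 1) → Euc d, AffineIndependent ℝ v ∧ S = convexHull ℝ (Set.range v) ∧
    (∀ i : Fin n, v i.castSucc ∈ intrinsicInterior ℝ (F i)) ∧
    v (Fin.last n) ∈ interior P

/-- `S` is a flag simplex of `P`. -/
def IsFlagSimplex (n : ℕ) (P S : Set (Euc d)) : Prop :=
  ∃ F : Fin n → Set (Euc d), IsCompleteFlag n P F ∧ IsFlagSimplexAssoc n P F S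

/-- The weighted floating body `P_δ^φ`: the intersection of all closed half-spaces `H⁻`
whose complementary half-space `H⁺` cuts off weighted volume at most `δ` from `P`. -/
def weightedFloatingBody (P : Set (Euc d)) (φ : Euc d → ℝ) (δ : ℝ) : Set (Euc d) :=
  ⋂₀ {H | ∃ (f : Euc d →L[ℝ] ℝ) (c : ℝ), f ≠ 0 ∧ H = {x | f x ≤ c} ∧
      (∫ x in P ∩ {x | c ≤ f x}, φ x) ≤ δ}

/-- The convex floating body `P_δ`. -/
def floatingBody (P : Set (Euc d)) (δ : ℝ) : Set (Euc d) :=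
  ⋂₀ {H | ∃ (f : Euc d →L[ℝ] ℝ) (c : ℝ), f ≠ 0 ∧ H = {x | f x ≤ c} ∧
      (volume (P ∩ {x | c ≤ f x})).toReal ≤ δ}

/-- `A⁺(T, z i, δ)`: the union of all sets `T ∩ int H⁺` over closed half-spaces `H⁺` with
`λ_n(T ∩ H⁺) ≤ δ`, `z i ∈ int H⁺` and `z j ∉ H⁺` for `j ≠ i`. -/
def Aplus (n : ℕ) (T : Set (Euc d)) (z : Fin (n + 1) → Euc d) (i : Fin (n + 1))
    (δ : ℝ) : Set (Euc d) :=
  ⋃₀ {A | ∃ (f : Euc d →L[ℝ] ℝ) (c : ℝ), f ≠ 0 ∧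
      A = T ∩ interior {x | c ≤ f x} ∧
      (volume (T ∩ {x | c ≤ f x})).toReal ≤ δ ∧
      z i ∈ interior {x | c ≤ f x} ∧
      ∀ j : Fin (n + 1), j ≠ i → z j ∉ {x | c ≤ f x}}

section IntrinsicInterior

variable {E : Type*} [AddCommGroup E] [Module ℝ E] [TopologicalSpace E]
  {s : Set E} {x y : E}

theorem mem_intrinsicInterior_iff_eventually :
    x ∈ intrinsicInterior ℝ s ↔
      x ∈ affineSpan ℝ s ∧ ∀ᶠ w in 𝓝[affineSpan ℝ s] x, w ∈ s := by
  rw [mem_intrinsicInterior]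
  constructor
  · rintro ⟨⟨x, hx⟩, hint, rfl⟩
    exact ⟨hx, preimage_coe_mem_nhds_subtype.1 (mem_interior_iff_mem_nhds.1 hint)⟩
  · rintro ⟨hx, hev⟩
    exact ⟨⟨x, hx⟩, mem_interior_iff_mem_nhds.2 (preimage_coe_mem_nhds_subtype.2 hev), rfl⟩

variable [IsTopologicalAddGroup E] [ContinuousSMul ℝ E]

theorem Convex.openSegment_subset_intrinsicInterior (hs : Convex ℝ s) (hx : x ∈ s)
    (hy : y ∈ intrinsicInterior ℝ s) : openSegment ℝ x y ⊆ intrinsicInterior ℝ s := by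
  rw [openSegment_eq_image_lineMap]
  rintro _ ⟨t, ht, rfl⟩
  obtain ⟨hyA, hyev⟩ := mem_intrinsicInterior_iff_eventually.1 hy
  have hxA : x ∈ affineSpan ℝ s := subset_affineSpan ℝ s hx
  -- a neighbourhood of `y` in the span, shrunk towards `x` by the factor `t`, stays in `s`
  set φ : E →ᵃ[ℝ] E := AffineMap.homothety x t⁻¹
  have hφ : φ (AffineMap.lineMap x y t) = y := by
    simp [φ, AffineMap.homothety_apply, AffineMap.lineMap_apply, smul_smul,
      inv_mul_cancel₀ ht.1.ne']
  have hφcont : Continuous φ := by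
    simp only [φ]
    fun_prop
  have hφA : MapsTo φ (affineSpan ℝ s) (affineSpan ℝ s) := fun w hw =>
    AffineMap.lineMap_mem _ hxA hw
  have htend := hφcont.continuousWithinAt.tendsto_nhdsWithin (x := AffineMap.lineMap x y t) hφA
  rw [hφ] at htend
  refine mem_intrinsicInterior_iff_eventually.2 ⟨AffineMap.lineMap_mem _ hxA hyA, ?_⟩
  filter_upwards [htend.eventually hyev] with w hw
  have hw' : AffineMap.lineMap x (φ w) t = w := by
    simp [φ, AffineMap.homothety_apply, AffineMap.lineMap_apply, smul_smul,
      mul_inv_cancel₀ ht.1.ne']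
  exact hw' ▸ hs.lineMap_mem hx hw ⟨ht.1.le, ht.2.le⟩

theorem IsMaxOn.eq_of_mem_intrinsicInterior {f : E →ₗ[ℝ] ℝ} (hmax : IsMaxOn f s x)
    (hx : x ∈ intrinsicInterior ℝ s) (hy : y ∈ s) : f y = f x := by
  obtain ⟨hxA, hxev⟩ := mem_intrinsicInterior_iff_eventually.1 hx
  -- extend the segment from `y` to `x` slightly beyond `x`; `f` is affine along it
  have hline : Tendsto (AffineMap.lineMap y x) (𝓝[>] (1 : ℝ)) (𝓝[affineSpan ℝ s] x) := by
    refine tendsto_nhdsWithin_of_tendsto_nhds_of_eventually_within _ ?_ ?_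
    · simpa using (AffineMap.lineMap_continuous (R := ℝ) (p := y) (q := x)).continuousWithinAt
        (s := Ioi 1) (x := 1) |>.tendsto
    · exact Eventually.of_forall fun t =>
        AffineMap.lineMap_mem _ (subset_affineSpan ℝ s hy) hxA
  obtain ⟨t, hts, ht1⟩ := ((hline.eventually hxev).and self_mem_nhdsWithin).exists
  have hft : f (AffineMap.lineMap y x t) = f y + t * (f x - f y) := by
    simp only [AffineMap.lineMap_apply_module, map_add, map_smul, smul_eq_mul]
    ring
  have hle : f (AffineMap.lineMap y x t) ≤ f x := hmax hts
  have hge : f y ≤ f x := hmax hy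
  nlinarith

end IntrinsicInterior

theorem IsFace.subset {P F : Set (Euc d)} (hF : IsFace P F) : F ⊆ P := by
  obtain ⟨f, c, -, -, -, rfl⟩ := hF
  exact sep_subset P _

theorem IsFace.convex {P F : Set (Euc d)} (hF : IsFace P F) (hP : Convex ℝ P) : Convex ℝ F := by
  obtain ⟨f, c, -, -, -, rfl⟩ := hF
  exact hP.inter (convex_hyperplane f.isLinear c)

theorem IsFace.disjoint_intrinsicInterior {P F S : Set (Euc d)} (hF : IsFace P F)
    (hSP : S ⊆ P) (hSF : ¬S ⊆ F) : Disjoint F (intrinsicInterior ℝ S) := by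
  obtain ⟨f, c, -, hle, -, rfl⟩ := hF
  rw [disjoint_left]
  rintro x ⟨-, hxc⟩ hx
  refine hSF fun y hy => ⟨hSP hy, ?_⟩
  have hmax : IsMaxOn (f : Euc d →ₗ[ℝ] ℝ) S x := fun z hz => hxc ▸ hle z (hSP hz)
  exact (hmax.eq_of_mem_intrinsicInterior hx hy).trans hxc

theorem IsFace.disjoint_intrinsicInterior_of_finrank_lt {P F S : Set (Euc d)} (hF : IsFace P F)
    (hSP : S ⊆ P)
    (hdim : Module.finrank ℝ (vectorSpan ℝ F) < Module.finrank ℝ (vectorSpan ℝ S)) :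
    Disjoint (intrinsicInterior ℝ F) (intrinsicInterior ℝ S) :=
  (hF.disjoint_intrinsicInterior hSP fun hSF =>
    (Submodule.finrank_mono (vectorSpan_mono ℝ hSF)).not_gt hdim).mono_left
      intrinsicInterior_subset

theorem finrank_vectorSpan_of_nonempty_interior {V : Type*} [NormedAddCommGroup V]
    [NormedSpace ℝ V] {s : Set V} (hs : (interior s).Nonempty) :
    Module.finrank ℝ (vectorSpan ℝ s) = Module.finrank ℝ V := by
  have htop : affineSpan ℝ s = ⊤ :=
    top_unique <| isOpen_interior.affineSpan_eq_top hs ▸ affineSpan_mono ℝ interior_subset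
  rw [AffineSubspace.vectorSpan_eq_top_of_affineSpan_eq_top ℝ V V htop, finrank_top]

theorem Fin.monotone_of_monotone_comp_castSucc {α : Type*} [Preorder α] {n : ℕ}
    {f : Fin (n + 1) → α} (hf : Monotone (f ∘ Fin.castSucc))
    (hlast : ∀ i : Fin n, f i.castSucc ≤ f (Fin.last n)) : Monotone f := by
  intro i j hij
  induction j using Fin.lastCases with
  | last =>
    induction i using Fin.lastCases with
    | last => exact le_rfl
    | cast i => exact hlast i
  | cast j =>
    obtain ⟨i, rfl⟩ :=
      Fin.eq_castSucc_of_ne_last (Fin.ne_last_of_lt (hij.trans_lt (Fin.castSucc_lt_last j)))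
    exact hf (Fin.castSucc_le_castSucc_iff.1 hij)

theorem Monotone.convex_biUnion_intrinsicInterior {E ι : Type*} [AddCommGroup E] [Module ℝ E]
    [TopologicalSpace E] [IsTopologicalAddGroup E] [ContinuousSMul ℝ E] [LinearOrder ι]
    {G : ι → Set E} (hG : Monotone G) (hconv : ∀ i, Convex ℝ (G i)) (I : Set ι) :
    Convex ℝ (⋃ i ∈ I, intrinsicInterior ℝ (G i)) := by
  refine convex_iff_openSegment_subset.2 fun p hp q hq => ?_
  obtain ⟨i, hi, hpi⟩ := mem_iUnion₂.1 hp
  obtain ⟨j, hj, hqj⟩ := mem_iUnion₂.1 hq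
  rcases le_total i j with hij | hji
  · exact ((hconv j).openSegment_subset_intrinsicInterior (hG hij (intrinsicInterior_subset hpi))
      hqj).trans (subset_biUnion_of_mem (u := fun i => intrinsicInterior ℝ (G i)) hj)
  · rw [openSegment_symm]
    exact ((hconv i).openSegment_subset_intrinsicInterior (hG hji (intrinsicInterior_subset hqj))
      hpi).trans (subset_biUnion_of_mem (u := fun i => intrinsicInterior ℝ (G i)) hi)

/-- **Lemma (flag dissection).** Let `(F₀,…,F_{n-1})` be a complete flag of an `n`-polytope
`P`, extended by `F_n := P` to a family `G : Fin (n+1) → Set`. For every `I ⊆ {0,…,n}`,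
the convex hull of `⋃_{i ∈ I} relint (G i)` equals `⋃_{i ∈ I} relint (G i)`, and the sets
`relint (G i)`, `i ∈ I`, are pairwise disjoint. -/
theorem flag_dissection (n : ℕ) (P : Set (Euc n)) (hP : IsPolytope P)
    (F : Fin n → Set (Euc n)) (hF : IsCompleteFlag n P F)
    (G : Fin (n + 1) → Set (Euc n))
    (hG : ∀ i : Fin n, G i.castSucc = F i) (hGlast : G (Fin.last n) = P)
    (I : Set (Fin (n + 1))) :
    convexHull ℝ (⋃ i ∈ I, intrinsicInterior ℝ (G i)) =
        ⋃ i ∈ I, intrinsicInterior ℝ (G i) ∧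
    ∀ i ∈ I, ∀ j ∈ I, i ≠ j →
      Disjoint (intrinsicInterior ℝ (G i)) (intrinsicInterior ℝ (G j)) := by
  obtain ⟨V, -, rfl, hint⟩ := hP
  have hsub : ∀ i, G i ⊆ convexHull ℝ V :=
    Fin.lastCases hGlast.le fun i => hG i ▸ (hF.1 i).1.subset
  have hconv : ∀ i, Convex ℝ (G i) :=
    Fin.lastCases (hGlast ▸ convex_convexHull ℝ V)
      fun i => hG i ▸ (hF.1 i).1.convex (convex_convexHull ℝ V)
  have hdim : ∀ i : Fin (n + 1), Module.finrank ℝ (vectorSpan ℝ (G i)) = i :=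
    Fin.lastCases (by
        rw [hGlast, finrank_vectorSpan_of_nonempty_interior hint, finrank_euclideanSpace_fin]
        rfl)
      fun i => hG i ▸ (hF.1 i).2
  have hmono : Monotone G := Fin.monotone_of_monotone_comp_castSucc
    (fun i j hij => by simpa only [Function.comp_apply, hG] using hF.2 i j hij)
    fun i => hGlast ▸ hsub i.castSucc
  have hdisj : ∀ i j : Fin (n + 1), i < j →
      Disjoint (intrinsicInterior ℝ (G i)) (intrinsicInterior ℝ (G j)) := by
    intro i j hij
    obtain ⟨i, rfl⟩ := Fin.eq_castSucc_of_ne_last (Fin.ne_last_of_lt hij)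
    refine (hG i ▸ (hF.1 i).1).disjoint_intrinsicInterior_of_finrank_lt (hsub j) ?_
    rwa [hdim, hdim]
  refine ⟨(hmono.convex_biUnion_intrinsicInterior hconv I).convexHull_eq, fun i _ j _ hij => ?_⟩
  exact hij.lt_or_gt.elim (hdisj i j) fun hji => (hdisj j i hji).symm
end
end

section
/- Let P be an n-polytope in ℝⁿ and let S be a flag simplex of P. Then there exists an n-simplex T with P ⊂ T such that S is also a flag simplex of T. -/
open Set MeasureTheory Filter
open scoped Topology RealInnerProductSpace symmDiff

noncomputable section

variable {d : ℕ}

/-!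
Write the faces of the flag as `F i = {x ∈ P | f i x = c i}` with `f i ≤ c i` on `P`. Going down
the flag, each `f i` cuts the direction of the next larger face (or of `P`) down by exactly one
dimension, so the direction of `F i` is `⋂_{j ≥ i} ker f j`; in particular the `f j` are linearly
independent. The half-spaces `f j ≤ c j` together with one more half-space `∑ j, (c j - f j) ≤ t`,
`t` large, therefore cut out a simplex `T ⊇ P`, whose faces `{x ∈ T | ∀ j ≥ i, f j x = c j}` form
a complete flag. Each of them contains `F i` and has the same dimension, hence the same affine
span, so the relative interiors can only grow and `S` stays a flag simplex.
-/

open Module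

theorem intrinsicInterior_subset_of_finrank_vectorSpan_le {𝕜 V P : Type*} [Field 𝕜]
    [AddCommGroup V] [Module 𝕜 V] [FiniteDimensional 𝕜 V] [TopologicalSpace P]
    [AddTorsor V P] {s t : Set P} (hst : s ⊆ t)
    (h : finrank 𝕜 (vectorSpan 𝕜 t) ≤ finrank 𝕜 (vectorSpan 𝕜 s)) :
    intrinsicInterior 𝕜 s ⊆ intrinsicInterior 𝕜 t := by
  rcases s.eq_empty_or_nonempty with rfl | hs
  · simp
  have hspan : affineSpan 𝕜 s = affineSpan 𝕜 t :=
    AffineSubspace.eq_of_direction_eq_of_nonempty_of_le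
      (by simpa only [direction_affineSpan] using
        Submodule.eq_of_le_of_finrank_le (vectorSpan_mono 𝕜 hst) h)
      ((affineSpan_nonempty 𝕜).2 hs) (affineSpan_mono 𝕜 hst)
  unfold intrinsicInterior
  rw [hspan]
  exact image_mono (interior_mono (preimage_mono hst))

theorem vectorSpan_le_ker_of_forall_eq {K V : Type*} [Field K] [AddCommGroup V] [Module K V]
    {s : Set V} {φ : V →ₗ[K] K} {a : K} (h : ∀ x ∈ s, φ x = a) :
    vectorSpan K s ≤ LinearMap.ker φ := by
  rw [vectorSpan_def, Submodule.span_le]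
  rintro _ ⟨x, hx, y, hy, rfl⟩
  simp [h x hx, h y hy]

theorem Submodule.eq_inf_ker_of_finrank_eq_add_one {K V : Type*} [Field K] [AddCommGroup V]
    [Module K V] [FiniteDimensional K V] {W' W : Submodule K V} {φ : V →ₗ[K] K}
    (hle : W' ≤ W) (hker : W' ≤ LinearMap.ker φ) (hW : ¬ W ≤ LinearMap.ker φ)
    (hrank : finrank K W = finrank K W' + 1) : W' = W ⊓ LinearMap.ker φ := by
  refine Submodule.eq_of_le_of_finrank_le (le_inf hle hker) ?_
  have hlt : W ⊓ LinearMap.ker φ < W := inf_le_left.lt_of_ne fun h => hW (h ▸ inf_le_right)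
  have := Submodule.finrank_lt_finrank_of_lt hlt
  omega

theorem Fin.eq_iInf_of_castSucc_eq_succ_inf {α : Type*} [CompleteLattice α] {n : ℕ}
    {a : Fin (n + 1) → α} {g : Fin n → α} (hlast : a (Fin.last n) = ⊤)
    (hstep : ∀ i : Fin n, a i.castSucc = a i.succ ⊓ g i) (i : Fin (n + 1)) :
    a i = ⨅ (j : Fin n) (_ : i ≤ j.castSucc), g j := by
  induction i using Fin.reverseInduction with
  | last => simp [hlast]
  | cast i ih =>
    rw [hstep, ih]
    simp only [Fin.castSucc_le_castSucc_iff, Fin.succ_le_castSucc_iff]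
    rw [biInf_ge_eq_inf, inf_comm]

theorem Module.Basis.exists_coord_eq_of_iInf_ker_eq_bot {K V ι : Type*} [Field K]
    [AddCommGroup V] [Module K V] [FiniteDimensional K V] [Fintype ι] (φ : ι → V →ₗ[K] K)
    (hφ : ⨅ j, LinearMap.ker (φ j) = ⊥) (hV : finrank K V = Fintype.card ι) :
    ∃ b : Basis ι K V, ∀ j, b.coord j = φ j := by
  have hinj : Function.Injective (LinearMap.pi φ) := by
    rw [← LinearMap.ker_eq_bot, LinearMap.ker_pi, hφ]
  refine ⟨.ofEquivFun (LinearMap.linearEquivOfInjective _ hinj (by simp [hV])), fun j => ?_⟩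
  ext x
  simp [Basis.ofEquivFun_repr_apply]

theorem add_sum_smul_mem_convexHull_insert {V ι : Type*} [AddCommGroup V] [Module ℝ V]
    [Fintype ι] (p : V) (v : ι → V) {s : ι → ℝ} (hs : ∀ i, 0 ≤ s i) (hs1 : ∑ i, s i ≤ 1) :
    p + ∑ i, s i • v i ∈ convexHull ℝ (insert p (range fun i => p + v i)) := by
  have hmem := (convex_convexHull ℝ (insert p (range fun i => p + v i))).sum_mem
    (t := Finset.univ) (w := fun o : Option ι => o.elim (1 - ∑ i, s i) s)
    (z := fun o => o.elim p fun i => p + v i)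
    (fun o _ => by cases o <;> simp [hs, hs1])
    (by simp [Fintype.sum_option])
    (fun o _ => subset_convexHull ℝ _ (by cases o <;> simp))
  convert hmem using 1
  simp only [Fintype.sum_option, Option.elim, smul_add, Finset.sum_add_distrib, ← Finset.sum_smul]
  module

namespace Module.Basis

variable {V : Type*} [AddCommGroup V] [Module ℝ V] {n : ℕ} (b : Basis (Fin n) ℝ V) (p : V)
  {t : ℝ}

def cornerVertices (t : ℝ) : Fin (n + 1) → V := Fin.cons p fun k => p + t • b k

theorem affineIndependent_cornerVertices (ht : t ≠ 0) :
    AffineIndependent ℝ (b.cornerVertices p t) := by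
  rw [affineIndependent_iff_linearIndependent_vsub ℝ _ 0,
    ← linearIndependent_equiv (finSuccAboveEquiv 0)]
  convert b.linearIndependent.units_smul fun _ => Units.mk0 t ht using 1
  · ext k
    simp [cornerVertices, finSuccAboveEquiv_apply]
  · rfl

theorem mem_convexHull_cornerVertices (ht : 0 < t) {x : V} (hx : ∀ j, 0 ≤ b.coord j (x - p))
    (hxt : ∑ j, b.coord j (x - p) ≤ t) : x ∈ convexHull ℝ (range (b.cornerVertices p t)) := by
  have hmem := add_sum_smul_mem_convexHull_insert p (fun k => t • b k)
    (s := fun j => b.coord j (x - p) / t) (fun j => div_nonneg (hx j) ht.le)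
    (by rw [← Finset.sum_div]; exact div_le_one_of_le₀ hxt ht.le)
  convert hmem using 1
  · simp [cornerVertices]
  · rw [Finset.sum_congr rfl fun i _ => by rw [smul_smul, div_mul_cancel₀ _ ht.ne', coord_apply],
      b.sum_repr, add_sub_cancel]

theorem coord_sub_nonneg_of_mem_convexHull_cornerVertices (ht : 0 ≤ t) {x : V}
    (hx : x ∈ convexHull ℝ (range (b.cornerVertices p t))) (j : Fin n) :
    0 ≤ b.coord j (x - p) := by
  have hconv : Convex ℝ {x | b.coord j p ≤ b.coord j x} :=
    convex_halfSpace_ge (b.coord j).isLinear _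
  suffices x ∈ {x | b.coord j p ≤ b.coord j x} by simpa [sub_nonneg] using this
  refine convexHull_min ?_ hconv hx
  rintro _ ⟨k, rfl⟩
  cases k using Fin.cases <;> simp [cornerVertices, Finsupp.single_apply, ite_nonneg, ht]

end Module.Basis

theorem Module.Basis.exists_isSimplex_superset {n : ℕ} (b : Basis (Fin n) ℝ (Euc d)) (p : Euc d)
    {P : Set (Euc d)} (hP : IsCompact P) (hPp : ∀ x ∈ P, ∀ j, 0 ≤ b.coord j (x - p)) :
    ∃ T, IsSimplex n T ∧ P ⊆ T ∧ p ∈ T ∧ ∀ x ∈ T, ∀ j, 0 ≤ b.coord j (x - p) := by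
  have hcont : Continuous fun x => ∑ j, b.coord j (x - p) :=
    continuous_finsetSum _ fun j _ =>
      (LinearMap.continuous_of_finiteDimensional _).comp (continuous_sub_right p)
  obtain ⟨C, hC⟩ := (hP.image hcont).bddAbove
  have ht : 0 < max C 1 := lt_max_of_lt_right one_pos
  refine ⟨convexHull ℝ (range (b.cornerVertices p (max C 1))),
    ⟨_, b.affineIndependent_cornerVertices p ht.ne', rfl⟩,
    fun x hx => b.mem_convexHull_cornerVertices p ht (hPp x hx)
      ((hC (mem_image_of_mem _ hx)).trans (le_max_left _ _)),
    subset_convexHull ℝ _ ⟨0, rfl⟩,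
    fun x hx => b.coord_sub_nonneg_of_mem_convexHull_cornerVertices p ht.le hx⟩

theorem IsFace.nonempty {P F : Set (Euc d)} (h : IsFace P F) : F.Nonempty := by
  obtain ⟨f, c, -, -, ⟨x, hxP, hx⟩, rfl⟩ := h
  exact ⟨x, hxP, hx⟩

theorem isFace_sep_forall_eq {ι : Type*} {T : Set (Euc d)} {s : Finset ι}
    {f : ι → Euc d →L[ℝ] ℝ} {c : ι → ℝ} (hle : ∀ x ∈ T, ∀ j ∈ s, f j x ≤ c j) {p : Euc d}
    (hpT : p ∈ T) (hp : ∀ j ∈ s, f j p = c j) (hs : ∑ j ∈ s, f j ≠ 0) :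
    IsFace T {x ∈ T | ∀ j ∈ s, f j x = c j} := by
  refine ⟨∑ j ∈ s, f j, ∑ j ∈ s, c j, hs, fun x hx => ?_, ⟨p, hpT, ?_⟩, ?_⟩
  · simpa using Finset.sum_le_sum (hle x hx)
  · simpa using Finset.sum_congr rfl hp
  · ext x
    simp only [mem_ofPred_eq, sum_apply]
    exact and_congr_right fun hx => (Finset.sum_eq_sum_iff_of_le (hle x hx)).symm

namespace IsCompleteFlag

variable {n : ℕ} {P : Set (Euc n)} {F : Fin n → Set (Euc n)} {f : Fin n → Euc n →L[ℝ] ℝ}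
  {c : Fin n → ℝ}

theorem finrank_vectorSpan_snoc (hF : IsCompleteFlag n P F) (hP : vectorSpan ℝ P = ⊤)
    (i : Fin (n + 1)) :
    finrank ℝ (vectorSpan ℝ (Fin.snoc (α := fun _ => Set (Euc n)) F P i)) = i := by
  induction i using Fin.lastCases with
  | last => rw [Fin.snoc_last, hP, finrank_top, finrank_euclideanSpace_fin, Fin.val_last]
  | cast i => rw [Fin.snoc_castSucc, (hF.1 i).2, Fin.val_castSucc]

theorem vectorSpan_snoc_eq_iInf_ker (hF : IsCompleteFlag n P F) (hP : vectorSpan ℝ P = ⊤)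
    (hFeq : ∀ i, F i = {x ∈ P | f i x = c i}) (i : Fin (n + 1)) :
    vectorSpan ℝ (Fin.snoc (α := fun _ => Set (Euc n)) F P i) =
      ⨅ (j : Fin n) (_ : i ≤ j.castSucc), LinearMap.ker (f j : Euc n →ₗ[ℝ] ℝ) := by
  have hrank := hF.finrank_vectorSpan_snoc hP
  set F' := Fin.snoc (α := fun _ => Set (Euc n)) F P
  have hF'last : F' (Fin.last n) = P := Fin.snoc_last (α := fun _ => Set (Euc n)) ..
  have hF'cast (j : Fin n) : F' j.castSucc = F j :=
    Fin.snoc_castSucc (α := fun _ => Set (Euc n)) ..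
  have hF'P (j : Fin (n + 1)) : F' j ⊆ P := by
    induction j using Fin.lastCases with
    | last => rw [hF'last]
    | cast j => rw [hF'cast, hFeq j]; exact sep_subset P _
  have hFF' (j : Fin n) : F j ⊆ F' j.succ := by
    rcases Fin.eq_castSucc_or_eq_last j.succ with ⟨k, hk⟩ | hk
    · rw [hk, hF'cast]
      exact hF.2 j k (Fin.castSucc_lt_castSucc_iff.1 (hk ▸ Fin.castSucc_lt_succ)).le
    · rw [hk, hF'last, hFeq j]
      exact sep_subset P _
  refine Fin.eq_iInf_of_castSucc_eq_succ_inf (a := fun j => vectorSpan ℝ (F' j))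
    (hF'last ▸ hP) (fun j => ?_) i
  have hlevel : ∀ x ∈ F j, f j x = c j := fun x hx => (hFeq j ▸ hx).2
  obtain ⟨x₀, hx₀⟩ := (hF.1 j).1.nonempty
  rw [hF'cast]
  refine Submodule.eq_inf_ker_of_finrank_eq_add_one (vectorSpan_mono ℝ (hFF' j))
    (vectorSpan_le_ker_of_forall_eq hlevel) (fun hle => ?_) ?_
  · have hsub : F' j.succ ⊆ F j := fun x hx => by
      have := hle (vsub_mem_vectorSpan ℝ hx (hFF' j hx₀))
      rw [hFeq j]
      exact ⟨hF'P _ hx, by simpa [hlevel x₀ hx₀, sub_eq_zero] using this⟩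
    have := Submodule.finrank_mono (vectorSpan_mono ℝ hsub)
    rw [hrank, (hF.1 j).2, Fin.val_succ] at this
    omega
  · rw [hrank, (hF.1 j).2, Fin.val_succ]

theorem iInf_ker_eq_bot (hF : IsCompleteFlag n P F) (hP : vectorSpan ℝ P = ⊤)
    (hFeq : ∀ i, F i = {x ∈ P | f i x = c i}) :
    ⨅ j, LinearMap.ker (f j : Euc n →ₗ[ℝ] ℝ) = ⊥ := by
  have h := hF.vectorSpan_snoc_eq_iInf_ker hP hFeq 0
  simp only [Fin.zero_le, iInf_pos] at h
  rw [← h, ← Submodule.finrank_eq_zero, hF.finrank_vectorSpan_snoc hP, Fin.val_zero]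

theorem vectorSpan_eq_iInf_ker (hF : IsCompleteFlag n P F) (hP : vectorSpan ℝ P = ⊤)
    (hFeq : ∀ i, F i = {x ∈ P | f i x = c i}) (i : Fin n) :
    vectorSpan ℝ (F i) = ⨅ (j) (_ : i ≤ j), LinearMap.ker (f j : Euc n →ₗ[ℝ] ℝ) := by
  simpa using hF.vectorSpan_snoc_eq_iInf_ker hP hFeq i.castSucc

end IsCompleteFlag

theorem IsFlagSimplexAssoc.isFlagSimplex_of_subset {n : ℕ} {P T S : Set (Euc n)}
    {F : Fin n → Set (Euc n)} (hS : IsFlagSimplexAssoc n P F S) (hF : IsCompleteFlag n P F)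
    (hP : vectorSpan ℝ P = ⊤) {f : Fin n → Euc n →L[ℝ] ℝ} {c : Fin n → ℝ}
    (hFeq : ∀ i, F i = {x ∈ P | f i x = c i}) (hPT : P ⊆ T) (hT : ∀ x ∈ T, ∀ j, f j x ≤ c j)
    {p : Euc n} (hpT : p ∈ T) (hp : ∀ j, f j p = c j)
    (hsum : ∀ i, ∑ j ∈ Finset.Ici i, f j ≠ 0) : IsFlagSimplex n T S := by
  set G : Fin n → Set (Euc n) := fun i => {x ∈ T | ∀ j ∈ Finset.Ici i, f j x = c j}
  have hFG (i : Fin n) : F i ⊆ G i := fun x hx =>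
    ⟨hPT (hFeq i ▸ hx).1, fun j hj => (hFeq j ▸ hF.2 i j (Finset.mem_Ici.1 hj) hx).2⟩
  have hrank (i : Fin n) :
      finrank ℝ (vectorSpan ℝ (G i)) ≤ finrank ℝ (vectorSpan ℝ (F i)) := by
    rw [hF.vectorSpan_eq_iInf_ker hP hFeq i]
    exact Submodule.finrank_mono (le_iInf₂ fun j hj =>
      vectorSpan_le_ker_of_forall_eq fun x hx => hx.2 j (Finset.mem_Ici.2 hj))
  have hface (i : Fin n) : IsFaceOfDim T i (G i) := by
    refine ⟨isFace_sep_forall_eq (fun x hx j _ => hT x hx j) hpT (fun j _ => hp j) (hsum i), ?_⟩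
    rw [← (hF.1 i).2]
    exact (hrank i).antisymm (Submodule.finrank_mono (vectorSpan_mono ℝ (hFG i)))
  have hmono (i j : Fin n) (hij : i ≤ j) : G i ⊆ G j := fun x hx =>
    ⟨hx.1, fun k hk => hx.2 k (Finset.mem_Ici.2 (hij.trans (Finset.mem_Ici.1 hk)))⟩
  obtain ⟨v, hv, rfl, hvF, hvP⟩ := hS
  exact ⟨G, ⟨hface, hmono⟩, v, hv, rfl,
    fun i => intrinsicInterior_subset_of_finrank_vectorSpan_le (hFG i) (hrank i) (hvF i),
    interior_mono hPT hvP⟩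

/-- **Lemma.** If `S` is a flag simplex of an `n`-polytope `P ⊆ ℝⁿ`, then there exists an
`n`-simplex `T ⊇ P` such that `S` is also a flag simplex of `T`. -/
theorem flag_simplex_of_circumscribed_simplex (n : ℕ) (P : Set (Euc n)) (hP : IsPolytope P)
    (S : Set (Euc n)) (hS : IsFlagSimplex n P S) :
    ∃ T : Set (Euc n), IsSimplex n T ∧ P ⊆ T ∧ IsFlagSimplex n T S := by
  obtain ⟨V, hV, rfl, hint⟩ := hP
  obtain ⟨F, hF, hS⟩ := hS
  choose f c _ hfle _ hFeq using fun i => (hF.1 i).1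
  have hspan : vectorSpan ℝ (convexHull ℝ V) = ⊤ := by
    rw [← direction_affineSpan, affineSpan_convexHull,
      affineSpan_eq_top_of_nonempty_interior hint, AffineSubspace.direction_top]
  obtain ⟨b, hb⟩ := Basis.exists_coord_eq_of_iInf_ker_eq_bot
    (fun j => -(f j : Euc n →ₗ[ℝ] ℝ)) (by simpa using hF.iInf_ker_eq_bot hspan hFeq) (by simp)
  have hfb (j : Fin n) (x : Euc n) : f j x = -b.coord j x := by simp [hb]
  set p : Euc n := ∑ j, (-c j) • b j
  have hbp (j : Fin n) : b.coord j p = -c j := by simp [p, Finsupp.single_apply]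
  have hp (j : Fin n) : f j p = c j := by rw [hfb, hbp, neg_neg]
  have hslack (x : Euc n) (j : Fin n) : b.coord j (x - p) = c j - f j x := by
    rw [map_sub, hbp, hfb]
    ring
  obtain ⟨T, hT, hPT, hpT, hTp⟩ :=
    b.exists_isSimplex_superset p (hV.isCompact_convexHull (𝕜 := ℝ))
      fun x hx j => by rw [hslack]; exact sub_nonneg.2 (hfle j x hx)
  refine ⟨T, hT, hPT, hS.isFlagSimplex_of_subset hF hspan hFeq hPT
    (fun x hx j => by simpa [hslack] using hTp x hx j) hpT hp fun i h => ?_⟩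
  simpa [hfb, Finsupp.single_apply] using congr($h (b i))
end
end
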